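/- For all 0 < x₁ ≤ x₂, ℙ(X₁ ≤ x₁ and X₂ ≤ x₂) = (1 − exp(−(λ/β)·(exp(β·x₁) − 1)))^{α₁+α₃}·(1 − exp(−(λ/β)·(exp(β·x₂) − 1)))^{α₂}, and for all 0 < x₂ ≤ x₁, ℙ(X₁ ≤ x₁ and X₂ ≤ x₂) = (1 − exp(−(λ/β)·(exp(β·x₁) − 1)))^{α₁}·(1 − exp(−(λ/β)·(exp(β·x₂) − 1)))^{α₂+α₃} (the bivariate generalized Gompertz joint cdf). -/

import Mathlib

/-!
Write `F x = 1 - exp (-(λ/β) (exp (β x) - 1))`. The event `{max U₀ U₂ ≤ x₁, max U₁ U₂ ≤ x₂}` is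
the box `{U₀ ≤ x₁} ∩ {U₁ ≤ x₂} ∩ {U₂ ≤ min x₁ x₂}`, so by independence its probability is
`F(x₁)^α₀ · F(x₂)^α₁ · F(min x₁ x₂)^α₂`; as `F > 0` on `(0, ∞)`, the two powers of `F (min x₁ x₂)`
merge into one.
-/

open MeasureTheory ProbabilityTheory Real

theorem one_sub_exp_neg_mul_exp_sub_one_pos {c β x : ℝ} (hc : 0 < c) (hβ : 0 < β) (hx : 0 < x) :
    0 < 1 - exp (-c * (exp (β * x) - 1)) := by
  have hexp : 0 < exp (β * x) - 1 := sub_pos.mpr (one_lt_exp_iff.mpr (mul_pos hβ hx))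
  have : exp (-c * (exp (β * x) - 1)) < 1 := exp_lt_one_iff.mpr (by nlinarith)
  linarith

theorem setOf_max_le_and_max_le_eq_iInter {Ω : Type*} (U : Fin 3 → Ω → ℝ) (x₁ x₂ : ℝ) :
    {ω | max (U 0 ω) (U 2 ω) ≤ x₁ ∧ max (U 1 ω) (U 2 ω) ≤ x₂} =
      ⋂ i, U i ⁻¹' Set.Iic (![x₁, x₂, min x₁ x₂] i) := by
  ext ω
  simp [Fin.forall_fin_succ]
  tauto

theorem ProbabilityTheory.iIndepFun.measure_max_le_and_max_le {Ω : Type*} [MeasurableSpace Ω]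
    {P : Measure Ω} {U : Fin 3 → Ω → ℝ} (hindep : iIndepFun U P) (x₁ x₂ : ℝ) :
    P {ω | max (U 0 ω) (U 2 ω) ≤ x₁ ∧ max (U 1 ω) (U 2 ω) ≤ x₂} =
      P {ω | U 0 ω ≤ x₁} * P {ω | U 1 ω ≤ x₂} * P {ω | U 2 ω ≤ min x₁ x₂} := by
  rw [setOf_max_le_and_max_le_eq_iInter,
    hindep.meas_iInter fun i => ⟨Set.Iic _, measurableSet_Iic, rfl⟩, Fin.prod_univ_three]
  rfl

theorem ENNReal.ofReal_rpow_mul_ofReal_rpow {a : ℝ} (ha : 0 < a) (p q : ℝ) :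
    ENNReal.ofReal (a ^ p) * ENNReal.ofReal (a ^ q) = ENNReal.ofReal (a ^ (p + q)) := by
  rw [← ENNReal.ofReal_mul (rpow_nonneg ha.le p), Real.rpow_add ha]

theorem bgg_joint_cdf_general
    {Ω : Type*} [MeasurableSpace Ω] (P : Measure Ω)
    (lam β : ℝ) (hlam : 0 < lam) (hβ : 0 < β)
    (α : Fin 3 → ℝ)
    (U : Fin 3 → Ω → ℝ)
    (hindep : iIndepFun U P)
    (hcdf_pos : ∀ i (x : ℝ), 0 ≤ x → P {ω | U i ω ≤ x} =
      ENNReal.ofReal ((1 - Real.exp (-(lam / β) * (Real.exp (β * x) - 1))) ^ (α i))) :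
    (∀ x₁ x₂ : ℝ, 0 < x₁ → x₁ ≤ x₂ →
      P {ω | max (U 0 ω) (U 2 ω) ≤ x₁ ∧ max (U 1 ω) (U 2 ω) ≤ x₂} =
        ENNReal.ofReal
          ((1 - Real.exp (-(lam / β) * (Real.exp (β * x₁) - 1))) ^ (α 0 + α 2) *
            (1 - Real.exp (-(lam / β) * (Real.exp (β * x₂) - 1))) ^ α 1)) ∧
    (∀ x₁ x₂ : ℝ, 0 < x₂ → x₂ ≤ x₁ →
      P {ω | max (U 0 ω) (U 2 ω) ≤ x₁ ∧ max (U 1 ω) (U 2 ω) ≤ x₂} =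
        ENNReal.ofReal
          ((1 - Real.exp (-(lam / β) * (Real.exp (β * x₁) - 1))) ^ α 0 *
            (1 - Real.exp (-(lam / β) * (Real.exp (β * x₂) - 1))) ^ (α 1 + α 2))) := by
  have hF : ∀ x, 0 < x → 0 < 1 - exp (-(lam / β) * (exp (β * x) - 1)) := fun x hx =>
    one_sub_exp_neg_mul_exp_sub_one_pos (div_pos hlam hβ) hβ hx
  refine ⟨fun x₁ x₂ hx₁ hle => ?_, fun x₁ x₂ hx₂ hle => ?_⟩
  · have hx₂ := hx₁.trans_le hle
    rw [hindep.measure_max_le_and_max_le, min_eq_left hle, hcdf_pos 0 x₁ hx₁.le,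
      hcdf_pos 1 x₂ hx₂.le, hcdf_pos 2 x₁ hx₁.le, mul_right_comm,
      ENNReal.ofReal_rpow_mul_ofReal_rpow (hF x₁ hx₁),
      ENNReal.ofReal_mul (rpow_nonneg (hF x₁ hx₁).le _)]
  · have hx₁ := hx₂.trans_le hle
    rw [hindep.measure_max_le_and_max_le, min_eq_right hle, hcdf_pos 0 x₁ hx₁.le,
      hcdf_pos 1 x₂ hx₂.le, hcdf_pos 2 x₂ hx₂.le, mul_assoc,
      ENNReal.ofReal_rpow_mul_ofReal_rpow (hF x₂ hx₂),
      ENNReal.ofReal_mul (rpow_nonneg (hF x₁ hx₁).le _)]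

/-- The bivariate generalized Gompertz joint cdf. -/
theorem bgg_joint_cdf
    {Ω : Type*} [MeasurableSpace Ω] (P : Measure Ω) [IsProbabilityMeasure P]
    (lam β : ℝ) (hlam : 0 < lam) (hβ : 0 < β)
    (α : Fin 3 → ℝ) (hα : ∀ i, 0 < α i)
    (U : Fin 3 → Ω → ℝ) (hUmeas : ∀ i, Measurable (U i))
    (hindep : iIndepFun U P)
    (hcdf_pos : ∀ i (x : ℝ), 0 ≤ x → P {ω | U i ω ≤ x} =
      ENNReal.ofReal ((1 - Real.exp (-(lam / β) * (Real.exp (β * x) - 1))) ^ (α i)))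
    (hcdf_neg : ∀ i (x : ℝ), x < 0 → P {ω | U i ω ≤ x} = 0) :
    (∀ x₁ x₂ : ℝ, 0 < x₁ → x₁ ≤ x₂ →
      P {ω | max (U 0 ω) (U 2 ω) ≤ x₁ ∧ max (U 1 ω) (U 2 ω) ≤ x₂} =
        ENNReal.ofReal
          ((1 - Real.exp (-(lam / β) * (Real.exp (β * x₁) - 1))) ^ (α 0 + α 2) *
            (1 - Real.exp (-(lam / β) * (Real.exp (β * x₂) - 1))) ^ α 1)) ∧
    (∀ x₁ x₂ : ℝ, 0 < x₂ → x₂ ≤ x₁ →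
      P {ω | max (U 0 ω) (U 2 ω) ≤ x₁ ∧ max (U 1 ω) (U 2 ω) ≤ x₂} =
        ENNReal.ofReal
          ((1 - Real.exp (-(lam / β) * (Real.exp (β * x₁) - 1))) ^ α 0 *
            (1 - Real.exp (-(lam / β) * (Real.exp (β * x₂) - 1))) ^ (α 1 + α 2))) :=
  bgg_joint_cdf_general P lam β hlam hβ α U hindep hcdf_pos
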